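/- A derivation d with boundary (s, t) is valid in the sense that ⟦s⁺⟧ ≫ ⟦d⟧ ≫ ⟦t⁻⟧ is total (defined on the canonical leaf inputs) whenever d is a single generator f and there is a syntax-map factorization σ : m_f ← m with s = σ ≫ src(f) and t = σ ≫ tgt(f); i.e., instances of a rule under substitution of metavariables are valid proofs of the substituted boundary. -/

import Mathlib

/-- Syntax trees over a signature `S` with arity function `ar`. -/
inductive STree (S : Type) (ar : S → ℕ) : Type
  | leaf : ℕ → STree S ar
  | node : (g : S) → (Fin (ar g) → STree S ar) → STree S ar

/-- Terms over signature `S` with metavariables in `Fin m`. -/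
inductive Term (S : Type) (ar : S → ℕ) (m : ℕ) : Type
  | var : Fin m → Term S ar m
  | op : (g : S) → (Fin (ar g) → Term S ar m) → Term S ar m

variable {S : Type} {ar : S → ℕ} [DecidableEq S]

/-- Substitution of terms for the metavariables of a term. -/
def Term.subst {m k : ℕ} (σ : Fin m → Term S ar k) : Term S ar m → Term S ar k
  | .var i => σ i
  | .op g ts => .op g (fun j => (ts j).subst σ)

/-- Substitution of trees for the metavariables of a term (evaluation). -/
def Term.substT {m : ℕ} (σ : Fin m → STree S ar) : Term S ar m → STree S ar
  | .var i => σ i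
  | .op g ts => .node g (fun j => (ts j).substT σ)

/-- Number of occurrences of the metavariable `i` in a term. -/
def Term.countVar {m : ℕ} (i : Fin m) : Term S ar m → ℕ
  | .var j => if j = i then 1 else 0
  | .op _ ts => ∑ j, (ts j).countVar i

/-- A partial assignment of trees to metavariables. -/
def PAsn (S : Type) (ar : S → ℕ) (m : ℕ) : Type := Fin m → Option (STree S ar)

open Classical in
/-- Merge two partial assignments; fails if they disagree on some variable. -/
noncomputable def mergeAsn {m : ℕ} (σ τ : PAsn S ar m) : Option (PAsn S ar m) :=
  if ∀ i : Fin m, ∀ a ∈ σ i, ∀ b ∈ τ i, a = b then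
    some (fun i => (σ i).orElse (fun _ => τ i))
  else none

/-- Merge a finite family of optional partial assignments. -/
noncomputable def mergeAll {m : ℕ} : {k : ℕ} → (Fin k → Option (PAsn S ar m)) → Option (PAsn S ar m)
  | 0, _ => some (fun _ => none)
  | _ + 1, f =>
      (f 0).bind fun σ => (mergeAll (fun j => f j.succ)).bind (mergeAsn σ)

/-- Pattern matching of a tree against a term: returns the partial assignment of
trees to the metavariables occurring in the pattern, if the shapes agree. -/
noncomputable def Term.pmatch {m : ℕ} : Term S ar m → STree S ar → Option (PAsn S ar m)
  | .var i, t => some (fun j => if j = i then some t else none)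
  | .op _ _, .leaf _ => none
  | .op g ps, .node g' ts =>
      if h : g' = g then
        mergeAll (fun j : Fin (ar g) => (ps j).pmatch (ts (Fin.cast (by rw [h]) j)))
      else none

/-- Matching a tuple of trees against a tuple of patterns. -/
noncomputable def matchTuple {m a : ℕ} (u : Fin a → Term S ar m) (x : Fin a → STree S ar) :
    Option (PAsn S ar m) :=
  mergeAll (fun i : Fin a => (u i).pmatch (x i))

/-- Evaluating a tuple of patterns (a syntax map) at an assignment of trees. -/
def evalTuple {m a : ℕ} (u : Fin a → Term S ar m) (σ : Fin m → STree S ar) :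
    Fin a → STree S ar := fun i => (u i).substT σ

/-- Extract a total assignment from a partial one, if it is everywhere defined. -/
noncomputable def totalize {m : ℕ} (π : PAsn S ar m) : Option (Fin m → STree S ar) :=
  if h : ∀ i, (π i).isSome then some (fun i => (π i).get (h i)) else none

/-- The matcher semantics `⟦u⁻⟧` of a tuple of patterns. -/
noncomputable def matcherSem {m a : ℕ} (u : Fin a → Term S ar m)
    (x : Fin a → STree S ar) : Option (Fin m → STree S ar) :=
  (matchTuple u x).bind totalize

/-- Kleisli composition of partial functions. -/
def kcomp {A B C : Type*} (f : A → Option B) (g : B → Option C) : A → Option C :=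
  fun a => (f a).bind g

/-- Tensor of partial functions on products. -/
def pprod {A B C D : Type*} (f : A → Option B) (g : C → Option D) :
    A × C → Option (B × D) :=
  fun x => (f x.1).bind fun b => (g x.2).map fun d => (b, d)

/-- The semantics `⟦src(f)⁻⟧ ≫ ⟦tgt(f)⁺⟧` of a proof generator. -/
noncomputable def genSem {m a b : ℕ} (src : Fin a → Term S ar m)
    (tgt : Fin b → Term S ar m) (x : Fin a → STree S ar) :
    Option (Fin b → STree S ar) :=
  (matcherSem src x).map (fun σ => evalTuple tgt σ)

/-!
Matching a pattern `p` against its own instance `p.substT ρ` always succeeds and returns `ρ`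
restricted to the metavariables occurring in `p`. As every metavariable of `src` occurs in it,
`⟦src⁻⟧` undoes `⟦src⁺⟧`. Evaluating `σ` at the leaves gives a tree assignment `ρ` with
`⟦s⁺⟧(leaves) = ⟦src⁺⟧(ρ)`, so the generator outputs `⟦tgt⁺⟧(ρ) = ⟦t⁺⟧(leaves)`, which `⟦t⁻⟧`
matches.
-/

section

omit [DecidableEq S]

open Classical in
noncomputable def PAsn.restrict {m : ℕ} (ρ : Fin m → STree S ar) (P : Fin m → Prop) :
    PAsn S ar m :=
  fun i => if P i then some (ρ i) else none

lemma mergeAsn_restrict {m : ℕ} (ρ : Fin m → STree S ar) (P Q : Fin m → Prop) :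
    mergeAsn (PAsn.restrict ρ P) (PAsn.restrict ρ Q) =
      some (PAsn.restrict ρ fun i => P i ∨ Q i) := by
  unfold mergeAsn
  rw [if_pos]
  · congr 1
    funext i
    by_cases hP : P i <;> by_cases hQ : Q i <;> simp [PAsn.restrict, hP, hQ]
  · intro i x hx y hy
    simp only [PAsn.restrict] at hx hy
    split_ifs at hx hy <;> simp_all

lemma mergeAll_restrict {m : ℕ} (ρ : Fin m → STree S ar) :
    ∀ {k : ℕ} (P : Fin k → Fin m → Prop),
      mergeAll (fun j => some (PAsn.restrict ρ (P j))) =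
        some (PAsn.restrict ρ fun i => ∃ j, P j i)
  | 0, _ => congrArg some (funext fun i => by simp [PAsn.restrict])
  | k + 1, P => by
    simp only [mergeAll, Option.bind_some, mergeAll_restrict ρ (fun j => P j.succ),
      mergeAsn_restrict, Fin.exists_fin_succ]

lemma totalize_restrict {m : ℕ} (ρ : Fin m → STree S ar) {P : Fin m → Prop} (hP : ∀ i, P i) :
    totalize (PAsn.restrict ρ P) = some ρ := by
  simp [totalize, PAsn.restrict, hP]

lemma Term.substT_subst {m k : ℕ} (σ : Fin m → Term S ar k) (τ : Fin k → STree S ar)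
    (p : Term S ar m) :
    (p.subst σ).substT τ = p.substT fun i => (σ i).substT τ := by
  induction p with
  | var v => rfl
  | op g ts ih => simp only [Term.subst, Term.substT, ih]

lemma evalTuple_subst {m k a : ℕ} (u : Fin a → Term S ar m) (σ : Fin m → Term S ar k)
    (τ : Fin k → STree S ar) :
    evalTuple (fun i => (u i).subst σ) τ = evalTuple u fun i => (σ i).substT τ :=
  funext fun i => Term.substT_subst σ τ (u i)

end

lemma Term.pmatch_substT {m : ℕ} (ρ : Fin m → STree S ar) (p : Term S ar m) :
    p.pmatch (p.substT ρ) = some (PAsn.restrict ρ fun i => 0 < p.countVar i) := by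
  induction p with
  | var v =>
    simp only [Term.substT, Term.pmatch, Term.countVar]
    congr 1
    funext i
    rcases eq_or_ne i v with rfl | h
    · simp [PAsn.restrict]
    · simp [PAsn.restrict, h, h.symm]
  | op g ts ih =>
    simp only [Term.substT, Term.pmatch, dif_pos, Fin.cast_eq_self, ih, mergeAll_restrict,
      Term.countVar, Finset.sum_pos_iff, Finset.mem_univ, true_and]

lemma matchTuple_evalTuple {m a : ℕ} (u : Fin a → Term S ar m) (ρ : Fin m → STree S ar) :
    matchTuple u (evalTuple u ρ) =
      some (PAsn.restrict ρ fun i => ∃ j, 0 < (u j).countVar i) := by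
  simp only [matchTuple, evalTuple, Term.pmatch_substT, mergeAll_restrict]

lemma matcherSem_evalTuple {m a : ℕ} (u : Fin a → Term S ar m) (ρ : Fin m → STree S ar)
    (hocc : ∀ i, ∃ j, 0 < (u j).countVar i) :
    matcherSem u (evalTuple u ρ) = some ρ := by
  rw [matcherSem, matchTuple_evalTuple, Option.bind_some, totalize_restrict ρ hocc]

lemma genSem_evalTuple {mf a b : ℕ} (src : Fin a → Term S ar mf) (tgt : Fin b → Term S ar mf)
    (hocc : ∀ i, ∃ j, 0 < (src j).countVar i) (ρ : Fin mf → STree S ar) :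
    genSem src tgt (evalTuple src ρ) = some (evalTuple tgt ρ) := by
  rw [genSem, matcherSem_evalTuple src ρ hocc, Option.map_some]

/-- Instances of a rule under substitution of metavariables are valid proofs of
the substituted boundary: if the type `(s, t)` factors through the source and
target of a generator `f` via a common substitution `σ`, then evaluating
`⟦s⁺⟧` on the canonical leaf inputs, then `⟦f⟧`, then matching with `⟦t⁻⟧`,
is defined. -/
theorem stmt19 {mf m a b : ℕ}
    (src : Fin a → Term S ar mf) (tgt : Fin b → Term S ar mf)
    (hocc : ∀ i : Fin mf, ∃ j : Fin a, 0 < (src j).countVar i)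
    (s : Fin a → Term S ar m) (t : Fin b → Term S ar m)
    (σ : Fin mf → Term S ar m)
    (hs : ∀ i, s i = (src i).subst σ) (ht : ∀ j, t j = (tgt j).subst σ) :
    ((genSem src tgt (evalTuple s (fun i => STree.leaf i))).bind
        (fun y => matchTuple t y)).isSome := by
  obtain rfl : s = fun i => (src i).subst σ := funext hs
  obtain rfl : t = fun j => (tgt j).subst σ := funext ht
  rw [evalTuple_subst, genSem_evalTuple src tgt hocc, Option.bind_some, ← evalTuple_subst,
    matchTuple_evalTuple, Option.isSome_some]
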